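/- arXiv:2002.07946 — 4 statements merged into one kernel-verified Lean document; each statement's English description precedes it below -/
import Mathlib

section
/- Let R be a commutative ring and A an Azumaya algebra over R, i.e., A is a finitely generated projective faithful R-module and the natural map A ⊗_R A^op → End_R(A) (sending a ⊗ b to the map x ↦ a x b) is an isomorphism. Then for every commutative R-algebra S, the base change A ⊗_R S is an Azumaya algebra over S. -/
open TensorProduct MulOpposite

variable (R A : Type*) [CommRing R] [Ring A] [Algebra R A]

/-- Right multiplication as an algebra map from the opposite algebra to endomorphisms. -/
noncomputable def mulRightAlgHom : Aᵐᵒᵖ →ₐ[R] Module.End R A where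
  toFun b := LinearMap.mulRight R b.unop
  map_one' := by ext a; simp
  map_mul' x y := by ext a; simp [mul_assoc]
  map_zero' := by ext a; simp
  map_add' x y := by ext a; simp [mul_add]
  commutes' r := by
    ext a
    simp [Module.algebraMap_end_apply, MulOpposite.algebraMap_apply, ← Algebra.commutes,
      Algebra.smul_def]

/-- The sandwich map `A ⊗_R A^op → End_R(A)`, sending `a ⊗ b` to `x ↦ a * x * b`. -/
noncomputable def sandwichMap : A ⊗[R] Aᵐᵒᵖ →ₐ[R] Module.End R A :=
  Algebra.TensorProduct.lift (Algebra.lmul R A) (mulRightAlgHom R A)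
    (fun a b => by
      show _ = _
      ext x
      simp [mulRightAlgHom, mul_assoc])

/-- `A` is an Azumaya algebra over `R` if it is a finitely generated projective faithful
`R`-module and the sandwich map `A ⊗_R A^op → End_R(A)` is bijective. -/
def IsAzumayaAlgebra : Prop :=
  Module.Finite R A ∧ Module.Projective R A ∧ FaithfulSMul R A ∧
    Function.Bijective (sandwichMap R A)

/-!
Finiteness and projectivity of `S ⊗[R] A` are inherited directly. For faithfulness, the trace
ideal `T = ∑_{f ∈ M^*} f(M)` of a projective module `M` satisfies `T • M = M`, so by Nakayama it
is all of `R` once `M` is finitely generated and faithful; a relation `1 = ∑ fᵢ(mᵢ)` survives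
base change and forces `S ⊗[R] M` to be faithful. For the sandwich map, `Hom_R(M, N)` commutes
with base change when `M` is finitely generated projective, being a retract of the free case;
under `S ⊗ (A ⊗ Aᵒᵖ) ≃ (S ⊗ A) ⊗_S (S ⊗ A)ᵒᵖ` the sandwich map of `S ⊗ A` is then the base change
of that of `A`.
-/

namespace Module

variable (M : Type*) [AddCommGroup M] [Module R M]

def traceIdeal : Ideal R := Ideal.span {r | ∃ (f : Module.Dual R M) (m : M), f m = r}

variable {R M}

lemma top_le_traceIdeal_smul_top [Module.Projective R M] :
    (⊤ : Submodule R M) ≤ traceIdeal R M • ⊤ := by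
  obtain ⟨s, hs⟩ := Module.projective_def'.mp ‹_›
  intro m _
  have hm : m = (s m).sum fun x c => c • x := by
    simpa [Finsupp.linearCombination_apply] using (LinearMap.congr_fun hs m).symm
  rw [hm]
  exact Submodule.finsuppSum_mem _ _ _ _ fun x _ => Submodule.smul_mem_smul
    (Ideal.subset_span ⟨Finsupp.lapply x ∘ₗ s, m, rfl⟩) trivial

lemma traceIdeal_eq_top [Module.Finite R M] [Module.Projective R M] [FaithfulSMul R M] :
    traceIdeal R M = ⊤ := by
  obtain ⟨r, hr, hr_smul⟩ := Submodule.exists_sub_one_mem_and_smul_eq_zero_of_fg_of_le_smul _ ⊤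
    (Module.Finite.fg_top (R := R) (M := M)) top_le_traceIdeal_smul_top
  obtain rfl : r = 0 := FaithfulSMul.eq_of_smul_eq_smul fun m => by
    rw [hr_smul m trivial, zero_smul]
  rw [Ideal.eq_top_iff_one]
  simpa using neg_mem hr

lemma faithfulSMul_baseChange_of_traceIdeal_eq_top (S : Type*) [CommRing S] [Algebra R S]
    (h : traceIdeal R M = ⊤) : FaithfulSMul S (S ⊗[R] M) := by
  refine Module.annihilator_eq_bot.mp ((Submodule.eq_bot_iff (Module.annihilator S (S ⊗[R] M))).mpr
    fun s hs => ?_)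
  rw [Module.mem_annihilator] at hs
  have hle : traceIdeal R M ≤ LinearMap.ker (LinearMap.toSpanSingleton R S s) := by
    refine Ideal.span_le.mpr ?_
    rintro _ ⟨f, m, rfl⟩
    have hsm : s ⊗ₜ[R] m = 0 := by simpa [smul_tmul'] using hs (1 ⊗ₜ m)
    calc f m • s = (TensorProduct.rid R S) (LinearMap.lTensor S f (s ⊗ₜ m)) := by simp
      _ = 0 := by rw [hsm, map_zero, map_zero]
  have hone : (1 : R) ∈ traceIdeal R M := h ▸ Submodule.mem_top
  simpa using hle hone

end Module

lemma Function.Bijective.of_retract {α β α' β' : Type*} {f : α → β} {f' : α' → β'}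
    (hf : Function.Bijective f) {i : α' → α} {r : α → α'} {i' : β' → β} {r' : β → β'}
    (hri : Function.LeftInverse r i) (hri' : Function.LeftInverse r' i')
    (hi : f ∘ i = i' ∘ f') (hr : f' ∘ r = r' ∘ f) : Function.Bijective f' := by
  refine ⟨fun x y hxy => ?_, fun y => ?_⟩
  · have hix (z : α') : f (i z) = i' (f' z) := congrFun hi z
    have : f (i x) = f (i y) := by rw [hix, hix, hxy]
    rw [← hri x, ← hri y, hf.injective this]
  · obtain ⟨z, hz⟩ := hf.surjective (i' y)
    exact ⟨r z, by simpa [hz, hri' y] using congrFun hr z⟩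

section Retract

variable {R} (S : Type*) [CommRing S] [Algebra R S]
  {M N M' N' : Type*} [AddCommMonoid M] [AddCommMonoid N] [Module R M] [Module R N]
  [AddCommMonoid M'] [AddCommMonoid N'] [Module R M'] [Module R N']
  [Module S M'] [Module S N'] [IsScalarTower R S M'] [IsScalarTower R S N']

lemma IsBaseChange.of_retract {h : M →ₗ[R] M'} {h' : N →ₗ[R] N'} (hb : IsBaseChange S h)
    {u : N →ₗ[R] M} {v : M →ₗ[R] N} {u' : N' →ₗ[S] M'} {v' : M' →ₗ[S] N'}
    (hvu : v ∘ₗ u = LinearMap.id) (hvu' : v' ∘ₗ u' = LinearMap.id)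
    (hu : h ∘ₗ u = u'.restrictScalars R ∘ₗ h') (hv : h' ∘ₗ v = v'.restrictScalars R ∘ₗ h) :
    IsBaseChange S h' := by
  have hbij : Function.Bijective (h'.liftBaseChange S) := by
    refine hb.equiv.bijective.of_retract (i := u.baseChange S) (r := v.baseChange S)
      (i' := u') (r' := v') (fun x => ?_) (fun x => ?_) ?_ ?_
    · rw [← LinearMap.comp_apply, ← LinearMap.baseChange_comp, hvu, LinearMap.baseChange_id,
        LinearMap.id_apply]
    · exact LinearMap.congr_fun hvu' x
    · refine congrArg DFunLike.coe (?_ : hb.equiv.toLinearMap ∘ₗ u.baseChange S = u' ∘ₗ _)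
      ext x
      simpa using LinearMap.congr_fun hu x
    · refine congrArg DFunLike.coe
        (?_ : h'.liftBaseChange S ∘ₗ v.baseChange S = v' ∘ₗ hb.equiv.toLinearMap)
      ext x
      simpa using LinearMap.congr_fun hv x
  exact IsBaseChange.of_equiv (LinearEquiv.ofBijective _ hbij) fun x => by simp

end Retract

lemma LinearMap.lcomp_comp_lcomp_of_comp_eq_id {S M M₂ : Type*} (N : Type*) [CommSemiring S]
    [AddCommMonoid M] [AddCommMonoid M₂] [AddCommMonoid N] [Module S M] [Module S M₂] [Module S N]
    {f : M →ₗ[S] M₂} {g : M₂ →ₗ[S] M} (h : g ∘ₗ f = LinearMap.id) :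
    LinearMap.lcomp S N f ∘ₗ LinearMap.lcomp S N g = LinearMap.id := by
  ext φ : 1
  rw [LinearMap.comp_apply, LinearMap.lcomp_apply', LinearMap.lcomp_apply', LinearMap.comp_assoc,
    h, LinearMap.comp_id, LinearMap.id_apply]

lemma Module.Projective.isBaseChange_baseChangeHom (S : Type*) [CommRing S] [Algebra R S]
    (M N : Type*) [AddCommGroup M] [AddCommGroup N] [Module R M] [Module R N]
    [Module.Finite R M] [Module.Projective R M] :
    IsBaseChange S (LinearMap.baseChangeHom R S M N) := by
  obtain ⟨n, p, hp⟩ := Module.Finite.exists_fin' R M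
  obtain ⟨i, hi⟩ := Module.projective_lifting_property p LinearMap.id hp
  have hpi : p.baseChange S ∘ₗ i.baseChange S = LinearMap.id := by
    rw [← LinearMap.baseChange_comp, hi, LinearMap.baseChange_id]
  refine (Module.isBaseChange_map_of_finite_free N S (Fin n)).of_retract S
    (LinearMap.lcomp_comp_lcomp_of_comp_eq_id N hi)
    (LinearMap.lcomp_comp_lcomp_of_comp_eq_id (S ⊗[R] N) hpi) ?_ ?_
  · ext
    simp
  · ext
    simp

@[simp]
lemma sandwichMap_tmul_apply (a : A) (b : Aᵐᵒᵖ) (x : A) :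
    sandwichMap R A (a ⊗ₜ b) x = a * x * b.unop := by
  simp [sandwichMap, mulRightAlgHom, mul_assoc]

section Sandwich

variable (S : Type*) [CommRing S] [Algebra R S]

noncomputable def sandwichBaseChangeEquiv :
    S ⊗[R] (A ⊗[R] Aᵐᵒᵖ) ≃ₗ[S] (S ⊗[R] A) ⊗[S] (S ⊗[R] A)ᵐᵒᵖ :=
  AlgebraTensorModule.distribBaseChange R S A Aᵐᵒᵖ ≪≫ₗ LinearEquiv.lTensor (S ⊗[R] A)
    ((opLinearEquiv R).symm.baseChange R S _ _ ≪≫ₗ opLinearEquiv S)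

lemma sandwichMap_comp_sandwichBaseChangeEquiv [Module.Finite R A] [Module.Projective R A] :
    (sandwichMap S (S ⊗[R] A)).toLinearMap ∘ₗ (sandwichBaseChangeEquiv R A S).toLinearMap =
      (Module.Projective.isBaseChange_baseChangeHom R S A A).equiv.toLinearMap ∘ₗ
        (sandwichMap R A).toLinearMap.baseChange S := by
  ext a b x
  simp [sandwichBaseChangeEquiv]

lemma sandwichMap_baseChange_bijective [Module.Finite R A] [Module.Projective R A]
    (h : Function.Bijective (sandwichMap R A)) :
    Function.Bijective (sandwichMap S (S ⊗[R] A)) := by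
  have hcomm := congrArg DFunLike.coe (sandwichMap_comp_sandwichBaseChangeEquiv R A S)
  simp only [LinearMap.coe_comp, LinearEquiv.coe_coe, AlgHom.coe_toLinearMap] at hcomm
  rw [← (sandwichBaseChangeEquiv R A S).bijective.of_comp_iff, hcomm]
  exact (Module.Projective.isBaseChange_baseChangeHom R S A A).equiv.bijective.comp
    (LinearEquiv.ofBijective _ h |>.baseChange R S _ _).bijective

end Sandwich

/-- The Azumaya condition is stable under arbitrary base change: if `A` is Azumaya over `R`
and `S` is any commutative `R`-algebra, then `S ⊗_R A` is Azumaya over `S`. -/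
theorem isAzumayaAlgebra_baseChange
    (h : IsAzumayaAlgebra R A)
    (S : Type*) [CommRing S] [Algebra R S] :
    IsAzumayaAlgebra S (S ⊗[R] A) := by
  obtain ⟨_, _, _, hbij⟩ := h
  exact ⟨inferInstance, inferInstance,
    Module.faithfulSMul_baseChange_of_traceIdeal_eq_top S Module.traceIdeal_eq_top,
    sandwichMap_baseChange_bijective R A S hbij⟩
end

section
/- Let R → S be a faithfully flat homomorphism of commutative rings and let A be an R-algebra which is finitely generated projective as an R-module. If A ⊗_R S is an Azumaya algebra over S, then A is an Azumaya algebra over R. -/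
open TensorProduct MulOpposite

variable (R A : Type*) [CommRing R] [Ring A] [Algebra R A]

/-!
Both parts of the Azumaya condition descend along the faithfully flat map `R → S`.
Faithfulness is detected by the injectivity of `R → A`, which follows from that of
`R → S → S ⊗ A = R → A → S ⊗ A`. For the sandwich map, `S ⊗ End_R(A) ≅ End_S(S ⊗ A)` since `A`
is finitely presented and `S` is flat, so up to isomorphisms the base change of the sandwich map
of `A` is the sandwich map of `S ⊗ A`; faithful flatness reflects its bijectivity.
-/

theorem faithfulSMul_of_faithfulSMul_tensorProduct {R : Type*} (S : Type*) {A : Type*}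
    [CommSemiring R] [CommSemiring S] [Algebra R S] [Semiring A] [Algebra R A]
    [FaithfulSMul R S] [FaithfulSMul S (S ⊗[R] A)] : FaithfulSMul R A := by
  have hinj : Function.Injective (algebraMap R (S ⊗[R] A)) := by
    rw [IsScalarTower.algebraMap_eq R S (S ⊗[R] A)]
    exact (FaithfulSMul.algebraMap_injective S _).comp (FaithfulSMul.algebraMap_injective R S)
  refine (faithfulSMul_iff_algebraMap_injective R A).2 (Function.Injective.of_comp
    (f := Algebra.TensorProduct.includeRight (R := R) (A := S)) ?_)
  convert hinj using 1
  funext r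
  exact Algebra.TensorProduct.includeRight.commutes r

theorem LinearMap.tensorProduct_bijective {R : Type*} (S : Type*) {M N : Type*} [CommRing R]
    [CommRing S] [Algebra R S] [AddCommGroup M] [Module R M] [AddCommGroup N] [Module R N]
    [Module.Flat R S] [Module.FinitePresentation R M] :
    Function.Bijective (LinearMap.tensorProduct R S M N) := by
  have h := Module.FinitePresentation.isBaseChange_map R M N S
  have : LinearMap.tensorProduct R S M N = h.equiv.toLinearMap :=
    TensorProduct.AlgebraTensorModule.ext fun _ _ => rfl
  exact this ▸ h.equiv.bijective

section BaseChange

variable {R A : Type*} [CommRing R] [Ring A] [Algebra R A] (S : Type*) [CommRing S] [Algebra R S]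

noncomputable def baseChangeTensorOpEquiv :
    S ⊗[R] (A ⊗[R] Aᵐᵒᵖ) ≃ₗ[S] (S ⊗[R] A) ⊗[S] (S ⊗[R] A)ᵐᵒᵖ :=
  TensorProduct.AlgebraTensorModule.distribBaseChange R S A Aᵐᵒᵖ ≪≫ₗ
    TensorProduct.congr (LinearEquiv.refl S _)
      (TensorProduct.AlgebraTensorModule.congr (LinearEquiv.refl S S) (opLinearEquiv R).symm ≪≫ₗ
        opLinearEquiv S)

@[simp]
theorem baseChangeTensorOpEquiv_tmul (s : S) (a : A) (b : Aᵐᵒᵖ) :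
    baseChangeTensorOpEquiv S (s ⊗ₜ (a ⊗ₜ b)) = (s ⊗ₜ[R] a) ⊗ₜ[S] op (1 ⊗ₜ[R] b.unop) := by
  simp [baseChangeTensorOpEquiv, TensorProduct.AlgebraTensorModule.distribBaseChange]

theorem tensorProduct_comp_baseChange_sandwichMap :
    LinearMap.tensorProduct R S A A ∘ₗ (sandwichMap R A).toLinearMap.baseChange S =
      (sandwichMap S (S ⊗[R] A)).toLinearMap ∘ₗ (baseChangeTensorOpEquiv S).toLinearMap := by
  ext a b c
  simp [sandwichMap, mulRightAlgHom, LinearMap.tensorProduct_apply, TensorProduct.liftAux_tmul]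

theorem bijective_baseChange_sandwichMap_iff [Module.Flat R S] [Module.FinitePresentation R A] :
    Function.Bijective ((sandwichMap R A).toLinearMap.baseChange S) ↔
      Function.Bijective (sandwichMap S (S ⊗[R] A)) := by
  rw [← (LinearMap.tensorProduct_bijective S).of_comp_iff', ← LinearMap.coe_comp,
    tensorProduct_comp_baseChange_sandwichMap, LinearMap.coe_comp, LinearEquiv.coe_coe,
    Function.Bijective.of_comp_iff _ (baseChangeTensorOpEquiv S).bijective, AlgHom.coe_toLinearMap]

end BaseChange

/-- Faithfully flat descent of the Azumaya condition: if `R → S` is faithfully flat,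
`A` is a finitely generated projective `R`-module, and `S ⊗_R A` is Azumaya over `S`,
then `A` is Azumaya over `R`. -/
theorem isAzumayaAlgebra_of_faithfullyFlat_baseChange
    (S : Type*) [CommRing S] [Algebra R S] [Module.FaithfullyFlat R S]
    (hfin : Module.Finite R A) (hproj : Module.Projective R A)
    (h : IsAzumayaAlgebra S (S ⊗[R] A)) :
    IsAzumayaAlgebra R A := by
  obtain ⟨-, -, hfaith, hbij⟩ := h
  have := Module.finitePresentation_of_projective R A
  refine ⟨hfin, hproj, faithfulSMul_of_faithfulSMul_tensorProduct S, ?_⟩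
  have hbc := (bijective_baseChange_sandwichMap_iff S).2 hbij
  rwa [LinearMap.baseChange_eq_ltensor, Module.FaithfullyFlat.lTensor_bijective_iff_bijective]
    at hbc
end

section
/- Let R be a commutative ring and let A, B be Azumaya algebras over R. Then A ⊗_R B is an Azumaya algebra over R, and A ⊗_R A^op is isomorphic, as an R-algebra, to End_R(A). Consequently, the set of Morita-equivalence classes of Azumaya algebras over R forms an abelian group under tensor product, with inverse given by the opposite algebra. -/
open TensorProduct MulOpposite

variable (R A : Type*) [CommRing R] [Ring A] [Algebra R A]

/-! The sandwich map of `A ⊗ B` factors as the shuffle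
`(A ⊗ B) ⊗ (A ⊗ B)ᵐᵒᵖ ≃ (A ⊗ Aᵐᵒᵖ) ⊗ (B ⊗ Bᵐᵒᵖ)`, followed by the tensor product of the sandwich
maps of `A` and `B`, followed by `End A ⊗ End B → End (A ⊗ B)`, which is bijective because `A` and
`B` are finitely generated projective. Faithfulness of `A ⊗ B` comes from flatness of `A`:
tensoring the injection `R → B` with `A` keeps it injective. -/

theorem Module.endTensorEndAlgHom_bijective {R : Type*} (M N : Type*) [CommSemiring R]
    [AddCommMonoid M] [Module R M] [Module.Finite R M] [Module.Projective R M]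
    [AddCommMonoid N] [Module R N] [Module.Finite R N] [Module.Projective R N] :
    Function.Bijective
      (Module.endTensorEndAlgHom (R := R) (S := R) (A := R) (M := M) (N := N)) := by
  convert (homTensorHomEquiv R M N M N).bijective
  ext x : 1
  rw [homTensorHomEquiv_apply]
  rfl

instance Algebra.TensorProduct.faithfulSMul {R A B : Type*} [CommSemiring R]
    [Semiring A] [Algebra R A] [Semiring B] [Algebra R B] [Module.Flat R A]
    [FaithfulSMul R A] [FaithfulSMul R B] :
    FaithfulSMul R (A ⊗[R] B) :=
  (faithfulSMul_iff_algebraMap_injective R (A ⊗[R] B)).mpr <|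
    (Algebra.TensorProduct.includeLeft_injective (S := R)
      (FaithfulSMul.algebraMap_injective R B)).comp (FaithfulSMul.algebraMap_injective R A)

section TensorProduct

variable (B : Type*) [Ring B] [Algebra R B]

noncomputable def tensorOpShuffle :
    (A ⊗[R] B) ⊗[R] (A ⊗[R] B)ᵐᵒᵖ ≃ₐ[R] (A ⊗[R] Aᵐᵒᵖ) ⊗[R] (B ⊗[R] Bᵐᵒᵖ) :=
  (Algebra.TensorProduct.congr .refl (Algebra.TensorProduct.opAlgEquiv R R A B).symm).trans
    (Algebra.TensorProduct.tensorTensorTensorComm R R R R A B Aᵐᵒᵖ Bᵐᵒᵖ)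

theorem sandwichMap_tensorProduct : sandwichMap R (A ⊗[R] B) =
    (Module.endTensorEndAlgHom.comp
      (Algebra.TensorProduct.map (sandwichMap R A) (sandwichMap R B))).comp
      (tensorOpShuffle R A B).toAlgHom := by
  ext
  case hb z a b =>
    simp only [AlgebraTensorModule.curry_apply, TensorProduct.curry_apply,
      LinearMap.restrictScalars_apply, AlgHom.comp_apply]
    induction z using MulOpposite.rec' with | h z => ?_
    induction z using TensorProduct.induction_on with
    | zero => simp
    | tmul a' b' =>
      simp [tensorOpShuffle, sandwichMap, mulRightAlgHom, Module.endTensorEndAlgHom_apply,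
        Algebra.TensorProduct.one_def]
    | add u v hu hv => simp only [op_add, map_add, LinearMap.add_apply, hu, hv]
  all_goals simp [tensorOpShuffle, sandwichMap, mulRightAlgHom, Module.endTensorEndAlgHom_apply,
    Algebra.TensorProduct.one_def]

variable {R A B} in
theorem IsAzumayaAlgebra.tensorProduct (hA : IsAzumayaAlgebra R A) (hB : IsAzumayaAlgebra R B) :
    IsAzumayaAlgebra R (A ⊗[R] B) := by
  obtain ⟨_, _, _, hA⟩ := hA
  obtain ⟨_, _, _, hB⟩ := hB
  refine ⟨inferInstance, inferInstance, inferInstance, ?_⟩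
  rw [sandwichMap_tensorProduct]
  exact (Module.endTensorEndAlgHom_bijective A B).comp <|
    (Algebra.TensorProduct.congr (.ofBijective _ hA) (.ofBijective _ hB)).bijective.comp
      (tensorOpShuffle R A B).bijective

end TensorProduct

/-- The tensor product of two Azumaya algebras over `R` is Azumaya, and `A ⊗_R A^op` is
isomorphic as an `R`-algebra to `End_R(A)`; these are the two facts underlying the group
structure (with inverse given by the opposite algebra) on Brauer classes of Azumaya
algebras. -/
theorem tensor_azumaya_and_inverse
    (B : Type*) [Ring B] [Algebra R B]
    (hA : IsAzumayaAlgebra R A) (hB : IsAzumayaAlgebra R B) :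
    IsAzumayaAlgebra R (A ⊗[R] B) ∧
      Nonempty ((A ⊗[R] Aᵐᵒᵖ) ≃ₐ[R] Module.End R A) :=
  ⟨hA.tensorProduct hB, ⟨.ofBijective _ hA.2.2.2⟩⟩
end

section
/- Let R → S be a faithfully flat ring map of commutative rings and let M be an R-module. If M ⊗_R S is a finitely generated projective S-module, then M is a finitely generated projective R-module. -/
/-!
Finite projective = finitely presented and flat, and both properties descend along a faithfully
flat `R → S`. Flatness descends directly. For finite presentation, `M` is finite by descent, so
`M ≅ Rⁿ / K`; since `S` is flat, `S ⊗ K` is the kernel of `Sⁿ → S ⊗ M`, which is finitely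
generated because `S ⊗ M` is finitely presented, and then `K` is finitely generated by descent.
-/

open TensorProduct

lemma Module.FinitePresentation.of_finitePresentation_tensorProduct_of_faithfullyFlat
    {R : Type*} (S : Type*) [CommRing R] [CommRing S] [Algebra R S] [Module.FaithfullyFlat R S]
    {M : Type*} [AddCommGroup M] [Module R M] [Module.FinitePresentation S (S ⊗[R] M)] :
    Module.FinitePresentation R M := by
  have : Module.Finite R M := .of_finite_tensorProduct_of_faithfullyFlat S
  obtain ⟨n, f, hf⟩ := Module.Finite.exists_fin' R M
  have hfS : Function.Surjective (AlgebraTensorModule.lTensor S S f) :=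
    LinearMap.lTensor_surjective S hf
  have : Module.Finite S (S ⊗[R] LinearMap.ker f) :=
    (Module.Finite.equiv_iff (LinearMap.tensorKerEquiv S S f)).mpr
      (Module.Finite.iff_fg.mpr (Module.FinitePresentation.fg_ker _ hfS))
  have : Module.Finite R (LinearMap.ker f) := .of_finite_tensorProduct_of_faithfullyFlat S
  exact Module.finitePresentation_of_surjective f hf (Module.Finite.iff_fg.mp this)

/-- Faithfully flat descent of the property of being a finitely generated projective module:
if `R → S` is faithfully flat and `M ⊗_R S` is finite projective over `S`, then `M` is
finite projective over `R`. -/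
theorem finite_projective_descends_along_faithfully_flat
    (R S : Type*) [CommRing R] [CommRing S] [Algebra R S] [Module.FaithfullyFlat R S]
    (M : Type*) [AddCommGroup M] [Module R M]
    (hfin : Module.Finite S (S ⊗[R] M)) (hproj : Module.Projective S (S ⊗[R] M)) :
    Module.Finite R M ∧ Module.Projective R M := by
  have : Module.FinitePresentation S (S ⊗[R] M) := Module.finitePresentation_of_projective _ _
  have : Module.FinitePresentation R M :=
    .of_finitePresentation_tensorProduct_of_faithfullyFlat S
  have : Module.Flat R M := .of_flat_tensorProduct R M S
  exact ⟨inferInstance, Module.Flat.projective_of_finitePresentation⟩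
end
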